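/- For n ≥ 1, in the q-shuffle algebra on x,y one has q^{-1} C_n = ( q·x ⋆ (C_{n-1} y) - q^{-1}·(C_{n-1} y) ⋆ x ) / (q - q^{-1}), where C_n = ∑ a_1⋯a_{2n} [1]_q [1+ā_1]_q [1+ā_1+ā_2]_q ⋯ [1+ā_1+⋯+ā_{2n}]_q summed over Catalan words of length 2n, and C_{n-1}y denotes the concatenation product. -/

import Mathlib

open scoped Classical

inductive Letter | x | y
deriving DecidableEq

instance : Fintype Letter := ⟨{Letter.x, Letter.y}, fun a => by cases a <;> simp⟩

/-- x ↦ 1, y ↦ -1 -/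
def bar : Letter → ℤ
  | .x => 1
  | .y => -1

/-- σ swaps the letters x and y. -/
def sigma : Letter → Letter
  | .x => .y
  | .y => .x

/-- the pairing ⟨u,v⟩ : 2 if u = v, -2 otherwise. -/
def pair : Letter → Letter → ℤ := fun u v => if u = v then 2 else -2

noncomputable section

/-- The free associative algebra on the two letters x, y (with its word basis). -/
abbrev V (F : Type*) [Field F] := MonoidAlgebra F (FreeMonoid Letter)

variable {F : Type*} [Field F]

/-- the basis word of V corresponding to a list of letters -/
def wd (w : List Letter) : V F := MonoidAlgebra.single (FreeMonoid.ofList w) 1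

/-- the q-shuffle product of two words, by the left recursion -/
def shuffleWord (q : F) : List Letter → List Letter → V F
  | [], v => wd v
  | u1 :: ut, [] => wd (u1 :: ut)
  | u1 :: ut, v1 :: vt =>
      wd [u1] * shuffleWord q ut (v1 :: vt)
      + q ^ (((u1 :: ut).map (fun a => pair a v1)).sum) •
          (wd [v1] * shuffleWord q (u1 :: ut) vt)
termination_by u v => u.length + v.length

/-- the q-shuffle product on V, extended bilinearly -/
def shuffle (q : F) (a b : V F) : V F :=
  a.coeff.sum fun u cu => b.coeff.sum fun v cv =>
    (cu * cv) • shuffleWord q (FreeMonoid.toList u) (FreeMonoid.toList v)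

/-- the quantum integer [m]_q -/
def qint (q : F) (m : ℤ) : F := (q ^ m - q ^ (-m)) / (q - q⁻¹)

/-- the quantum factorial [m]_q! -/
def qfac (q : F) (m : ℤ) : F := ∏ j ∈ Finset.range m.toNat, qint q ((j : ℤ) + 1)

/-- e_i = ā_1 + ⋯ + ā_i, the i-th elevation of the word w -/
def esum (w : List Letter) (i : ℕ) : ℤ := ((w.take i).map bar).sum

/-- A word is Catalan when all partial sums of bar are nonnegative and the total is zero. -/
def IsCatalan (w : List Letter) : Prop :=
  (∀ i, i ≤ w.length → 0 ≤ esum w i) ∧ esum w w.length = 0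

/-- the coefficient C(w) = ∏_{i=0}^{2n} [1 + e_i]_q -/
def Ccoef (q : F) (w : List Letter) : F :=
  ∏ i ∈ Finset.range (w.length + 1), qint q (1 + esum w i)

/-- the n-th Catalan element C_n = ∑_{w ∈ Cat_n} C(w) w  -/
def catalanElt (q : F) (n : ℕ) : V F :=
  ∑ f : Fin (2 * n) → Letter,
    if IsCatalan (List.ofFn f) then Ccoef q (List.ofFn f) • wd (List.ofFn f) else 0

/-- the antiautomorphism ζ : reverse the word and swap x,y, extended linearly -/
def zeta (a : V F) : V F :=
  a.coeff.sum fun w c =>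
    MonoidAlgebra.single (FreeMonoid.ofList (((FreeMonoid.toList w).map sigma).reverse)) c

/-- The profile of a word: delete from the elevation sequence every interior e_i
    such that e_{i+1}-e_i and e_i-e_{i-1} have the same sign. -/
def profile (w : List Letter) : List ℤ :=
  (List.range (w.length + 1)).filterMap fun i =>
    if i = 0 ∨ i = w.length then some (esum w i)
    else if 0 < (esum w (i + 1) - esum w i) * (esum w i - esum w (i - 1)) then none
    else some (esum w i)

/-- The list (ℓ_0, h_1, ℓ_1, h_2, …, h_r, ℓ_r). -/
def P (r : ℕ) (ℓ h : ℕ → ℤ) : List ℤ :=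
  List.ofFn fun i : Fin (2 * r + 1) =>
    if i.val % 2 = 0 then ℓ (i.val / 2) else h ((i.val + 1) / 2)

/-- the word x^{h_1} y^{h_1-ℓ_1} x^{h_2-ℓ_1} y^{h_2-ℓ_2} ⋯ x^{h_r-ℓ_{r-1}} y^{h_r} -/
def explicitWord (r : ℕ) (ℓ h : ℕ → ℤ) : List Letter :=
  (List.range r).flatMap fun i =>
    List.replicate (h (i + 1) - ℓ i).toNat Letter.x ++
      List.replicate (h (i + 1) - ℓ (i + 1)).toNat Letter.y

/-- C(ℓ_0,h_1,…,h_r,ℓ_r), the ratio of q-factorials attached to a profile. -/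
def Cprof (q : F) (r : ℕ) (ℓ h : ℕ → ℤ) : F :=
  (∏ i ∈ Finset.Icc 1 r, qfac q (h i) * qfac q (h i + 1)) /
    (∏ i ∈ Finset.range (r + 1), qfac q (ℓ i) * qfac q (ℓ i + 1))

end

/-! Write `C(v) = ∏_{i=0}^{|v|} [1 + e_i]_q`. For a Catalan word `L`, the word `L y` has total
elevation `-1`, so in `q · x ⋆ (L y) - q⁻¹ · (L y) ⋆ x` the insertion of `x` at position `k`
gets the weight `q^{2e_k+1} - q^{-2e_k-3} = (q - q⁻¹) q⁻¹ [2e_k + 2]_q`, which vanishes at the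
last position. On the other side `C(v)` telescopes through
`A_t = ∏_{i ≤ t} [1 + e_i]_q · ∏_{t ≤ j < |v|} [e_j]_q`, from `A_0 = 0` to `A_{|v|} = C(v)`.
The increment `A_{k+1} - A_k` is zero when `v_k = y`, and equals `C(L) [2e_k + 2]_q` when
`v = L_{<k} x L_{≥k} y`. Finally `(L, k) ↦ (L_{<k} x L_{≥k} y, k)` is a bijection from Catalan
`L` onto the nonzero increments: a non-Catalan `L` forces some `e_j(v) = 0` with `k < j < |v|`,
and the factor `[0]_q = 0` kills the increment. -/

lemma List.insertIdx_append_of_le_length {α : Type*} (l₁ l₂ : List α) (a : α) {k : ℕ}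
    (hk : k ≤ l₁.length) : (l₁ ++ l₂).insertIdx k a = l₁.insertIdx k a ++ l₂ := by
  induction l₁ generalizing k with
  | nil => simp_all
  | cons b t ih =>
    cases k with
    | zero => simp
    | succ k => simp [List.insertIdx_succ_cons, ih (by simpa using hk)]

lemma pair_x_left (b : Letter) : pair .x b = 2 * bar b := by cases b <;> rfl

lemma pair_x_right (b : Letter) : pair b .x = 2 * bar b := by cases b <;> rfl

lemma esum_succ (u : List Letter) {i : ℕ} (hi : i < u.length) :
    esum u (i + 1) = esum u i + bar u[i] := by
  rw [esum, esum, List.take_add_one, List.getElem?_eq_getElem hi]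
  simp only [Option.toList_some, List.map_append, List.sum_append, List.map_cons, List.map_nil,
    List.sum_cons, List.sum_nil, add_zero]

lemma esum_append_of_le (u w : List Letter) {i : ℕ} (hi : i ≤ u.length) :
    esum (u ++ w) i = esum u i := by
  simp [esum, List.take_append, Nat.sub_eq_zero_of_le hi]

lemma esum_insertIdx_of_le (u : List Letter) (a : Letter) {i k : ℕ} (hik : i ≤ k) :
    esum (u.insertIdx k a) i = esum u i := by
  rw [esum, List.take_insertIdx_eq_take_of_le _ _ _ _ hik, esum]

lemma esum_insertIdx_succ (u : List Letter) (a : Letter) {i k : ℕ} (hki : k ≤ i)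
    (hk : k ≤ u.length) : esum (u.insertIdx k a) (i + 1) = esum u i + bar a := by
  induction u generalizing i k with
  | nil => simp_all [esum]
  | cons b t ih =>
    cases k with
    | zero =>
      simp only [esum, List.insertIdx_zero, List.take_succ_cons, List.map_cons, List.sum_cons]
      ring
    | succ k =>
      obtain _ | i := i
      · omega
      simp only [List.insertIdx_succ_cons, esum, List.take_succ_cons, List.map_cons,
        List.sum_cons] at ih ⊢
      rw [ih (by omega) (by simp only [List.length_cons] at hk; omega)]
      ring

def insertXAppendY (L : List Letter) (k : ℕ) : List Letter := L.insertIdx k .x ++ [.y]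

section insertXAppendY

variable {L : List Letter} {k : ℕ}

lemma length_insertXAppendY (hk : k ≤ L.length) : (insertXAppendY L k).length = L.length + 2 := by
  simp [insertXAppendY, List.length_insertIdx_of_le_length hk]

lemma esum_insertXAppendY_of_le (hk : k ≤ L.length) {i : ℕ} (hik : i ≤ k) :
    esum (insertXAppendY L k) i = esum L i := by
  rw [insertXAppendY, esum_append_of_le _ _ (by rw [List.length_insertIdx_of_le_length hk]; omega),
    esum_insertIdx_of_le _ _ hik]

lemma esum_insertXAppendY_succ (hk : k ≤ L.length) {i : ℕ} (hki : k ≤ i) (hi : i ≤ L.length) :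
    esum (insertXAppendY L k) (i + 1) = esum L i + 1 := by
  rw [insertXAppendY, esum_append_of_le _ _ (by rw [List.length_insertIdx_of_le_length hk]; omega),
    esum_insertIdx_succ _ _ hki hk, bar]

lemma esum_insertXAppendY_length (hk : k ≤ L.length) :
    esum (insertXAppendY L k) (L.length + 2) = esum L L.length := by
  have hlen : L.length + 1 < (insertXAppendY L k).length := by
    rw [length_insertXAppendY hk]; omega
  rw [esum_succ _ hlen, esum_insertXAppendY_succ hk hk le_rfl]
  simp [insertXAppendY, List.getElem_append_right, List.length_insertIdx_of_le_length hk, bar]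

lemma insertXAppendY_inj {L' : List Letter} :
    insertXAppendY L k = insertXAppendY L' k ↔ L = L' := by
  rw [insertXAppendY, insertXAppendY, List.append_cancel_right_eq]
  exact (List.insertIdx_injective k _).eq_iff

lemma isCatalan_insertXAppendY (hL : IsCatalan L) (hk : k ≤ L.length) :
    IsCatalan (insertXAppendY L k) := by
  rw [IsCatalan, length_insertXAppendY hk, esum_insertXAppendY_length hk]
  refine ⟨fun i hi => ?_, hL.2⟩
  rcases le_or_gt i k with hik | hki
  · rw [esum_insertXAppendY_of_le hk hik]
    exact hL.1 i (by omega)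
  obtain ⟨j, rfl⟩ : ∃ j, i = j + 1 := ⟨i - 1, by omega⟩
  rcases Nat.lt_or_ge j (L.length + 1) with hj | hj
  · rw [esum_insertXAppendY_succ hk (by omega) (by omega)]
    linarith [hL.1 j (by omega)]
  · rw [show j + 1 = L.length + 2 by omega, esum_insertXAppendY_length hk]
    exact hL.1 _ le_rfl

lemma isCatalan_of_insertXAppendY (h : IsCatalan (insertXAppendY L k)) (hk : k ≤ L.length)
    (hL : ∀ i ≤ L.length, esum L i ≠ -1) : IsCatalan L := by
  rw [IsCatalan, length_insertXAppendY hk, esum_insertXAppendY_length hk] at h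
  refine ⟨fun i hi => ?_, h.2⟩
  rcases le_or_gt i k with hik | hki
  · rw [← esum_insertXAppendY_of_le hk hik]
    exact h.1 i (by omega)
  · have hsucc := h.1 (i + 1) (by omega)
    rw [esum_insertXAppendY_succ hk hki.le hi] at hsucc
    have hne := hL i hi
    omega

end insertXAppendY

lemma IsCatalan.getLast_eq_y {v : List Letter} (hv : IsCatalan v) (hne : v ≠ []) :
    v.getLast hne = .y := by
  have hlen : v.length - 1 < v.length := by
    have := List.length_pos_iff.mpr hne; omega
  have hsucc := esum_succ v hlen
  rw [Nat.sub_add_cancel (by omega), hv.2] at hsucc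
  have := hv.1 (v.length - 1) (by omega)
  rw [List.getLast_eq_getElem]
  cases h : v[v.length - 1]'hlen
  · rw [h, bar] at hsucc
    omega
  · rfl

lemma exists_insertXAppendY_eq {v : List Letter} (hv : IsCatalan v) {k : ℕ}
    (hk : k < v.length) (hx : v[k] = .x) : ∃ L, k ≤ L.length ∧ insertXAppendY L k = v := by
  have hne : v ≠ [] := List.ne_nil_of_length_pos (by omega)
  have hlast := hv.getLast_eq_y hne
  have hk' : k < v.dropLast.length := by
    rw [List.length_dropLast]
    by_contra hcon
    rw [List.getLast_eq_getElem] at hlast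
    simp_all [show k = v.length - 1 by omega]
  refine ⟨v.dropLast.eraseIdx k, by rw [List.length_eraseIdx_of_lt hk']; omega, ?_⟩
  rw [insertXAppendY, ← hx, ← List.getElem_dropLast hk', List.insertIdx_eraseIdx_getElem hk',
    ← hlast, List.dropLast_append_getLast]

noncomputable section

variable {F : Type*} [Field F] {q : F}

lemma sub_inv_ne_zero (hq0 : q ≠ 0) (hq : ∀ k : ℕ, 0 < k → q ^ k ≠ 1) : q - q⁻¹ ≠ 0 := by
  intro h
  apply hq 2 two_pos
  rw [pow_two]
  nth_rewrite 2 [sub_eq_zero.mp h]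
  exact mul_inv_cancel₀ hq0

lemma qint_zero (q : F) : qint q 0 = 0 := by simp [qint]

lemma zpow_sub_zpow_neg (hd : q - q⁻¹ ≠ 0) (m : ℤ) : q ^ m - q ^ (-m) = (q - q⁻¹) * qint q m := by
  rw [qint, mul_div_cancel₀ _ hd]

lemma qint_add_two_sub_mul (hq0 : q ≠ 0) (hd : q - q⁻¹ ≠ 0) (e : ℤ) :
    (qint q (e + 2) - qint q e) * qint q (e + 1) = qint q (2 * e + 2) := by
  have hsub : q ^ (e + 2) - q ^ (-(e + 2)) - (q ^ e - q ^ (-e)) =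
      (q - q⁻¹) * (q ^ (e + 1) + q ^ (-(e + 1))) := by
    simp only [zpow_add₀ hq0, neg_add, zpow_neg, zpow_one]
    field_simp
    ring
  have hmul : (q ^ (e + 1) + q ^ (-(e + 1))) * (q ^ (e + 1) - q ^ (-(e + 1))) =
      q ^ (2 * e + 2) - q ^ (-(2 * e + 2)) := by
    simp only [zpow_add₀ hq0, neg_add, zpow_neg, zpow_one, two_mul]
    field_simp
    ring
  rw [qint, qint, qint, qint, div_sub_div_same, hsub, mul_div_cancel_left₀ _ hd, ← mul_div_assoc,
    hmul]

lemma esum_ne_neg_one_of_Ccoef_ne_zero {L : List Letter} (h : Ccoef q L ≠ 0) {i : ℕ}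
    (hi : i ≤ L.length) : esum L i ≠ -1 := by
  intro he
  apply h
  apply Finset.prod_eq_zero (Finset.mem_range.mpr (Nat.lt_succ_of_le hi))
  rw [he, add_neg_cancel, qint_zero]

def partialCoef (q : F) (v : List Letter) (t : ℕ) : F :=
  (∏ i ∈ Finset.range (t + 1), qint q (1 + esum v i)) *
    ∏ j ∈ Finset.Ico t v.length, qint q (esum v j)

lemma partialCoef_zero {v : List Letter} (hv : v ≠ []) : partialCoef q v 0 = 0 := by
  refine mul_eq_zero_of_right _ (Finset.prod_eq_zero (i := 0) ?_ (by simp [esum, qint_zero]))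
  simpa using List.length_pos_iff.mpr hv

lemma partialCoef_length (v : List Letter) : partialCoef q v v.length = Ccoef q v := by
  simp [partialCoef, Ccoef]

lemma partialCoef_succ_sub {v : List Letter} {k : ℕ} (hk : k < v.length) :
    partialCoef q v (k + 1) - partialCoef q v k =
      (∏ i ∈ Finset.range (k + 1), qint q (1 + esum v i)) *
        (qint q (1 + esum v (k + 1)) - qint q (esum v k)) *
          ∏ j ∈ Finset.Ico (k + 1) v.length, qint q (esum v j) := by
  rw [partialCoef, partialCoef, Finset.prod_range_succ, Finset.prod_eq_prod_Ico_succ_bot hk]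
  ring

lemma partialCoef_succ_of_getElem_eq_y {v : List Letter} {k : ℕ} (hk : k < v.length)
    (hy : v[k] = .y) : partialCoef q v (k + 1) = partialCoef q v k := by
  rw [← sub_eq_zero, partialCoef_succ_sub hk, esum_succ v hk, hy, bar]
  simp

lemma partialCoef_insertXAppendY_succ_sub (hq0 : q ≠ 0) (hd : q - q⁻¹ ≠ 0) {L : List Letter}
    {k : ℕ} (hk : k ≤ L.length) :
    partialCoef q (insertXAppendY L k) (k + 1) - partialCoef q (insertXAppendY L k) k =
      Ccoef q L * qint q (2 * esum L k + 2) := by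
  have hlen := length_insertXAppendY hk
  have hhead : ∏ i ∈ Finset.range (k + 1), qint q (1 + esum (insertXAppendY L k) i) =
      ∏ i ∈ Finset.range (k + 1), qint q (1 + esum L i) :=
    Finset.prod_congr rfl fun i hi => by
      rw [esum_insertXAppendY_of_le hk (Nat.lt_succ_iff.mp (Finset.mem_range.mp hi))]
  have htail : ∏ j ∈ Finset.Ico (k + 1) (insertXAppendY L k).length,
        qint q (esum (insertXAppendY L k) j) =
      qint q (esum L k + 1) * ∏ j ∈ Finset.Ico (k + 1) (L.length + 1), qint q (1 + esum L j) := by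
    rw [hlen, show L.length + 2 = L.length + 1 + 1 from rfl,
      ← Finset.prod_Ico_add' (fun j => qint q (esum (insertXAppendY L k) j)) k (L.length + 1) 1,
      Finset.prod_eq_prod_Ico_succ_bot (by omega)]
    congr 1
    · rw [esum_insertXAppendY_succ hk le_rfl hk]
    · refine Finset.prod_congr rfl fun j hj => ?_
      rw [Finset.mem_Ico] at hj
      rw [esum_insertXAppendY_succ hk (by omega) (by omega), add_comm]
  rw [partialCoef_succ_sub (by omega), hhead, htail, esum_insertXAppendY_of_le hk le_rfl,
    esum_insertXAppendY_succ hk le_rfl hk, Ccoef,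
    ← Finset.prod_range_mul_prod_Ico _ (by omega : k + 1 ≤ L.length + 1),
    ← qint_add_two_sub_mul hq0 hd, show 1 + (esum L k + 1) = esum L k + 2 by ring]
  ring

lemma wd_mul (u w : List Letter) : (wd u : V F) * wd w = wd (u ++ w) := by
  rw [wd, wd, MonoidAlgebra.single_mul_single, one_mul]
  rfl

lemma shuffleWord_singleton_left (hq0 : q ≠ 0) (a : Letter) (u : List Letter) :
    shuffleWord q [a] u = ∑ k ∈ Finset.range (u.length + 1),
      q ^ ((u.take k).map (pair a)).sum • wd (u.insertIdx k a) := by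
  induction u with
  | nil => simp [shuffleWord]
  | cons b t ih =>
    rw [shuffleWord, ih, List.length_cons, Finset.sum_range_succ' _ (t.length + 1), add_comm]
    simp only [shuffleWord, wd_mul, Finset.mul_sum, mul_smul_comm, Finset.smul_sum, smul_smul,
      ← zpow_add₀ hq0]
    simp [List.insertIdx_succ_cons]

lemma shuffleWord_singleton_right (a : Letter) (u : List Letter) :
    shuffleWord q u [a] = ∑ k ∈ Finset.range (u.length + 1),
      q ^ ((u.drop k).map (fun b => pair b a)).sum • wd (u.insertIdx k a) := by
  induction u with
  | nil => simp [shuffleWord]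
  | cons b t ih =>
    rw [shuffleWord, ih, List.length_cons, Finset.sum_range_succ' _ (t.length + 1)]
    simp only [shuffleWord, wd_mul, Finset.mul_sum, mul_smul_comm]
    simp [List.insertIdx_succ_cons]

lemma shuffle_wd_left (u : List Letter) (b : V F) :
    shuffle q (wd u) b =
      Finsupp.linearCombination F (fun w => shuffleWord q u (FreeMonoid.toList w)) b.coeff := by
  simp [shuffle, wd, MonoidAlgebra.coeff_single, Finsupp.linearCombination_apply]

lemma shuffle_wd_right (a : V F) (u : List Letter) :
    shuffle q a (wd u) =
      Finsupp.linearCombination F (fun w => shuffleWord q (FreeMonoid.toList w) u) a.coeff := by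
  simp [shuffle, wd, MonoidAlgebra.coeff_single, Finsupp.linearCombination_apply]

lemma shuffle_wd_sum_smul_wd {ι : Type*} (u : List Letter) (s : Finset ι) (c : ι → F)
    (w : ι → List Letter) :
    shuffle q (wd u) (∑ i ∈ s, c i • wd (w i)) = ∑ i ∈ s, c i • shuffleWord q u (w i) := by
  rw [shuffle_wd_left, MonoidAlgebra.coeff_sum, map_sum]
  simp [wd, MonoidAlgebra.coeff_single]

lemma shuffle_sum_smul_wd_wd {ι : Type*} (u : List Letter) (s : Finset ι) (c : ι → F)
    (w : ι → List Letter) :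
    shuffle q (∑ i ∈ s, c i • wd (w i)) (wd u) = ∑ i ∈ s, c i • shuffleWord q (w i) u := by
  rw [shuffle_wd_right, MonoidAlgebra.coeff_sum, map_sum]
  simp [wd, MonoidAlgebra.coeff_single]

lemma sum_map_pair_x_take (u : List Letter) (k : ℕ) :
    ((u.take k).map (pair .x)).sum = 2 * esum u k := by
  simp only [esum, funext pair_x_left, List.sum_map_mul_left]

lemma sum_map_pair_x_drop (u : List Letter) (k : ℕ) :
    ((u.drop k).map (fun b => pair b .x)).sum = 2 * (esum u u.length - esum u k) := by
  have h := congrArg (fun l => (l.map bar).sum) (List.take_append_drop k u)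
  simp only [List.map_append, List.sum_append] at h
  simp only [esum, funext pair_x_right, List.sum_map_mul_left, List.take_length]
  rw [← h]
  ring

lemma esum_append_y (L : List Letter) : esum (L ++ [.y]) (L.length + 1) = esum L L.length - 1 := by
  rw [esum_succ _ (by simp), esum_append_of_le _ _ le_rfl, List.getElem_append_right le_rfl]
  simp only [Nat.sub_self, List.getElem_cons_zero, bar]
  ring

lemma qcomm_shuffleWord_x_append_y (hq0 : q ≠ 0) (hd : q - q⁻¹ ≠ 0) {L : List Letter}
    (hL : esum L L.length = 0) :
    q • shuffleWord q [.x] (L ++ [.y]) - q⁻¹ • shuffleWord q (L ++ [.y]) [.x] =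
      (q - q⁻¹) • ∑ k ∈ Finset.range (L.length + 1),
        (q⁻¹ * qint q (2 * esum L k + 2)) • wd (insertXAppendY L k) := by
  have htotal : esum (L ++ [.y]) (L.length + 1) = -1 := by rw [esum_append_y, hL]; ring
  rw [shuffleWord_singleton_left hq0, shuffleWord_singleton_right, Finset.smul_sum,
    Finset.smul_sum, ← Finset.sum_sub_distrib, List.length_append, List.length_singleton,
    Finset.sum_range_succ, Finset.smul_sum]
  simp only [smul_smul, ← sub_smul, sum_map_pair_x_take, sum_map_pair_x_drop, List.length_append,
    List.length_singleton, htotal, sub_self, mul_zero, zpow_zero, mul_one]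
  have hlast : q * q ^ (2 * (-1 : ℤ)) - q⁻¹ = 0 := by
    rw [mul_neg_one, zpow_neg, zpow_two]
    field_simp
    ring
  rw [hlast, zero_smul, add_zero]
  refine Finset.sum_congr rfl fun k hk => ?_
  have hkL : k ≤ L.length := Nat.lt_succ_iff.mp (Finset.mem_range.mp hk)
  rw [List.insertIdx_append_of_le_length _ _ _ hkL, ← insertXAppendY, esum_append_of_le _ _ hkL,
    mul_left_comm, ← zpow_sub_zpow_neg hd]
  congr 1
  simp only [zpow_add₀ hq0, zpow_mul, zpow_neg, zpow_sub₀ hq0, mul_sub, neg_add, zpow_one]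
  field_simp

def catalanWords (m : ℕ) : Finset (List Letter) :=
  (Finset.univ.image (List.ofFn : (Fin (2 * m) → Letter) → List Letter)).filter IsCatalan

lemma mem_catalanWords {m : ℕ} {v : List Letter} :
    v ∈ catalanWords m ↔ v.length = 2 * m ∧ IsCatalan v := by
  simp only [catalanWords, Finset.mem_filter, Finset.mem_image, Finset.mem_univ, true_and]
  refine and_congr_left fun _ => ⟨fun ⟨f, hf⟩ => hf ▸ List.length_ofFn, fun h => ?_⟩
  exact ⟨fun i => v[i.cast h.symm], List.ext_getElem (by simp [h]) (by simp)⟩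

lemma catalanElt_eq_sum (m : ℕ) :
    catalanElt q m = ∑ v ∈ catalanWords m, Ccoef q v • wd v := by
  rw [catalanWords, Finset.sum_filter, Finset.sum_image fun f _ g _ h => List.ofFn_injective h]
  rfl

lemma catalanElt_mul_wd_y (m : ℕ) :
    catalanElt q m * wd [.y] = ∑ L ∈ catalanWords m, Ccoef q L • wd (L ++ [.y]) := by
  simp only [catalanElt_eq_sum, Finset.sum_mul, smul_mul_assoc, wd_mul]

lemma catalanElt_eq_sum_partialCoef (m : ℕ) :
    catalanElt q (m + 1) = ∑ p ∈ catalanWords (m + 1) ×ˢ Finset.range (2 * m + 2),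
      (partialCoef q p.1 (p.2 + 1) - partialCoef q p.1 p.2) • wd p.1 := by
  rw [catalanElt_eq_sum, Finset.sum_product]
  refine Finset.sum_congr rfl fun v hv => ?_
  have hlen := (mem_catalanWords.mp hv).1
  dsimp only
  rw [← Finset.sum_smul, Finset.sum_range_sub (partialCoef q v), show 2 * m + 2 = v.length by omega,
    partialCoef_length, partialCoef_zero (List.ne_nil_of_length_pos (by omega)), sub_zero]

lemma sum_insertXAppendY_eq_sum_partialCoef (hq0 : q ≠ 0) (hd : q - q⁻¹ ≠ 0) (m : ℕ) :
    ∑ p ∈ catalanWords m ×ˢ Finset.range (2 * m + 1),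
        (Ccoef q p.1 * qint q (2 * esum p.1 p.2 + 2)) • wd (insertXAppendY p.1 p.2) =
      ∑ p ∈ catalanWords (m + 1) ×ˢ Finset.range (2 * m + 2),
        (partialCoef q p.1 (p.2 + 1) - partialCoef q p.1 p.2) • (wd p.1 : V F) := by
  refine Finset.sum_bij_ne_zero (fun p _ _ => (insertXAppendY p.1 p.2, p.2)) ?_ ?_ ?_ ?_
  · rintro ⟨L, k⟩ hp -
    simp only [Finset.mem_product, mem_catalanWords, Finset.mem_range] at hp ⊢
    have hk : k ≤ L.length := by omega
    exact ⟨⟨by rw [length_insertXAppendY hk]; omega, isCatalan_insertXAppendY hp.1.2 hk⟩, by omega⟩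
  · rintro ⟨L, k⟩ - - ⟨L', k'⟩ - - h
    simp only [Prod.mk.injEq] at h ⊢
    obtain ⟨h, rfl⟩ := h
    exact ⟨insertXAppendY_inj.mp h, rfl⟩
  · rintro ⟨v, k⟩ hp hne
    simp only [Finset.mem_product, mem_catalanWords, Finset.mem_range] at hp
    have hk : k < v.length := by omega
    have hx : v[k] = .x := by
      cases h : v[k]
      · rfl
      · rw [partialCoef_succ_of_getElem_eq_y hk h, sub_self, zero_smul] at hne
        exact absurd rfl hne
    obtain ⟨L, hkL, rfl⟩ := exists_insertXAppendY_eq hp.1.2 hk hx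
    rw [partialCoef_insertXAppendY_succ_sub hq0 hd hkL] at hne
    have hC : Ccoef q L ≠ 0 := fun h => hne (by rw [h, zero_mul, zero_smul])
    have hlen := length_insertXAppendY hkL
    refine ⟨(L, k), ?_, hne, rfl⟩
    simp only [Finset.mem_product, mem_catalanWords, Finset.mem_range]
    exact ⟨⟨by omega, isCatalan_of_insertXAppendY hp.1.2 hkL
      fun _ => esum_ne_neg_one_of_Ccoef_ne_zero hC⟩, by omega⟩
  · rintro ⟨L, k⟩ hp -
    simp only [Finset.mem_product, mem_catalanWords, Finset.mem_range] at hp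
    dsimp only
    rw [partialCoef_insertXAppendY_succ_sub hq0 hd (by omega)]

lemma qcomm_shuffle_x_catalanElt_mul_wd_y (hq0 : q ≠ 0) (hd : q - q⁻¹ ≠ 0) (m : ℕ) :
    (q - q⁻¹)⁻¹ • (q • shuffle q (wd [.x]) (catalanElt q m * wd [.y])
        - q⁻¹ • shuffle q (catalanElt q m * wd [.y]) (wd [.x]) : V F) =
      q⁻¹ • ∑ p ∈ catalanWords m ×ˢ Finset.range (2 * m + 1),
        (Ccoef q p.1 * qint q (2 * esum p.1 p.2 + 2)) • wd (insertXAppendY p.1 p.2) := by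
  rw [catalanElt_mul_wd_y, shuffle_wd_sum_smul_wd, shuffle_sum_smul_wd_wd, Finset.smul_sum,
    Finset.smul_sum, ← Finset.sum_sub_distrib, Finset.sum_product, Finset.smul_sum, Finset.smul_sum]
  refine Finset.sum_congr rfl fun L hL => ?_
  obtain ⟨hlen, hcat⟩ := mem_catalanWords.mp hL
  rw [smul_comm q, smul_comm q⁻¹, ← smul_sub, qcomm_shuffleWord_x_append_y hq0 hd hcat.2,
    smul_comm _ (q - q⁻¹), inv_smul_smul₀ hd, hlen, Finset.smul_sum, Finset.smul_sum]
  refine Finset.sum_congr rfl fun k _ => ?_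
  rw [smul_smul, smul_smul, mul_left_comm]

end

theorem stmt16 {F : Type*} [Field F] (q : F) (hq0 : q ≠ 0)
    (hq : ∀ k : ℕ, 0 < k → q ^ k ≠ 1) (n : ℕ) (hn : 1 ≤ n) :
    q⁻¹ • catalanElt q n =
      (q - q⁻¹)⁻¹ • (q • shuffle q (wd [Letter.x]) (catalanElt q (n - 1) * wd [Letter.y])
        - q⁻¹ • shuffle q (catalanElt q (n - 1) * wd [Letter.y]) (wd [Letter.x]) : V F) := by
  obtain ⟨m, rfl⟩ : ∃ m, n = m + 1 := ⟨n - 1, by omega⟩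
  have hd := sub_inv_ne_zero hq0 hq
  rw [Nat.add_sub_cancel, qcomm_shuffle_x_catalanElt_mul_wd_y hq0 hd,
    sum_insertXAppendY_eq_sum_partialCoef hq0 hd, catalanElt_eq_sum_partialCoef]
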